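/- arXiv:1904.02544 — 11 statements merged into one kernel-verified Lean document; each statement's English description precedes it below -/
import Mathlib

section
/- For a function f : B^n → B^n with f_n(x,0) = f_n(x,1) for all x ∈ B^{n-1}, and the reduced function f̃ defined by f̃_i(x) = f_i(x, f_n(x,0)): if the asynchronous dynamics of f̃ has a path from x to y, then the asynchronous dynamics of f has a path from (x, f_n(x,0)) to (y, f_n(y,0)). -/
/-- One step of the fully asynchronous dynamics of a Boolean network `f`:
an edge from `x` to the state obtained by flipping coordinate `i`, whenever `f_i(x) ≠ x_i`. -/
def asyncStep {ι : Type*} [DecidableEq ι] (f : (ι → Bool) → (ι → Bool))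
    (x y : ι → Bool) : Prop :=
  ∃ i, f x i ≠ x i ∧ y = Function.update x i (!x i)

/-- Value of the last component of `f`, with the last input set to `false`. -/
def lastComp {n : ℕ} (f : (Fin (n + 1) → Bool) → (Fin (n + 1) → Bool))
    (x : Fin n → Bool) : Bool :=
  f (Fin.snoc x false) (Fin.last n)

/-- The reduced function obtained by eliminating the last variable:
`f̃_i(x) = f_i(x, f_n(x,0))`. -/
def reduced {n : ℕ} (f : (Fin (n + 1) → Bool) → (Fin (n + 1) → Bool))
    (x : Fin n → Bool) : Fin n → Bool :=
  fun i => f (Fin.snoc x (lastComp f x)) i.castSucc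


/-! A step of `reduced f` flipping `x_i` is simulated in `f` by flipping coordinate `i`
and then, if needed, updating the last coordinate to its new target value. Since `f_n` does
not read its own coordinate, that target is `lastComp f` of the new state, so the lifted path
stays on the graph of `lastComp f`. -/

open Function Relation

theorem reflTransGen_asyncStep_update_self {ι : Type*} [DecidableEq ι]
    (f : (ι → Bool) → (ι → Bool)) (x : ι → Bool) (i : ι) :
    ReflTransGen (asyncStep f) x (update x i (f x i)) := by
  by_cases h : f x i = x i
  · rw [h, update_eq_self]
  · refine .single ⟨i, h, ?_⟩
    rw [Bool.eq_not_of_ne h]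

theorem apply_snoc_last_eq_lastComp {n : ℕ} {f : (Fin (n + 1) → Bool) → (Fin (n + 1) → Bool)}
    (hno : ∀ (x : Fin n → Bool) (a b : Bool),
      f (Fin.snoc x a) (Fin.last n) = f (Fin.snoc x b) (Fin.last n))
    (x : Fin n → Bool) (a : Bool) :
    f (Fin.snoc x a) (Fin.last n) = lastComp f x :=
  hno x a false

theorem asyncStep_snoc_of_asyncStep_reduced {n : ℕ}
    {f : (Fin (n + 1) → Bool) → (Fin (n + 1) → Bool)} {x x' : Fin n → Bool}
    (h : asyncStep (reduced f) x x') :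
    asyncStep f (Fin.snoc x (lastComp f x)) (Fin.snoc x' (lastComp f x)) := by
  obtain ⟨i, hne, rfl⟩ := h
  refine ⟨i.castSucc, ?_, ?_⟩
  · rwa [Fin.snoc_castSucc]
  · rw [Fin.snoc_update, Fin.snoc_castSucc]

theorem reflTransGen_snoc_lastComp_of_asyncStep_reduced {n : ℕ}
    {f : (Fin (n + 1) → Bool) → (Fin (n + 1) → Bool)}
    (hno : ∀ (x : Fin n → Bool) (a b : Bool),
      f (Fin.snoc x a) (Fin.last n) = f (Fin.snoc x b) (Fin.last n))
    {x x' : Fin n → Bool} (h : asyncStep (reduced f) x x') :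
    ReflTransGen (asyncStep f) (Fin.snoc x (lastComp f x)) (Fin.snoc x' (lastComp f x')) := by
  have hlast := reflTransGen_asyncStep_update_self f (Fin.snoc x' (lastComp f x)) (Fin.last n)
  rw [apply_snoc_last_eq_lastComp hno, Fin.update_snoc_last] at hlast
  exact .head (asyncStep_snoc_of_asyncStep_reduced h) hlast

theorem stmt1 {n : ℕ} (f : (Fin (n + 1) → Bool) → (Fin (n + 1) → Bool))
    (hno : ∀ (x : Fin n → Bool) (a b : Bool),
      f (Fin.snoc x a) (Fin.last n) = f (Fin.snoc x b) (Fin.last n))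
    (x y : Fin n → Bool)
    (hpath : Relation.ReflTransGen (asyncStep (reduced f)) x y) :
    Relation.ReflTransGen (asyncStep f)
      (Fin.snoc x (lastComp f x)) (Fin.snoc y (lastComp f y)) :=
  ReflTransGen.lift' (p := asyncStep f) (fun z => Fin.snoc z (lastComp f z))
    (fun _ _ => reflTransGen_snoc_lastComp_of_asyncStep_reduced hno) x y hpath
end

section
/- The fixed points of the reduced Boolean Delta-Notch system N over a finite undirected loopless connected graph G are in one-to-one correspondence with the minimal vertex covers of G; explicitly, x ∈ B^L is a fixed point of N if and only if the set {i : x_i = 1} is a minimal (with respect to inclusion) vertex cover of G. -/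
/-- The reduced Boolean Delta-Notch system over the cell graph `G`:
`N_i(n) = ⋁_{j ∈ S(i)} ¬ n_j`. -/
def Nsys {L : ℕ} (G : SimpleGraph (Fin L)) [DecidableRel G.Adj]
    (x : Fin L → Bool) : Fin L → Bool :=
  fun i => decide (∃ j, G.Adj i j ∧ x j = false)

/-- A vertex cover: every edge has an endpoint in `Q`. -/
def isVertexCover {L : ℕ} (G : SimpleGraph (Fin L)) (Q : Set (Fin L)) : Prop :=
  ∀ i j, G.Adj i j → i ∈ Q ∨ j ∈ Q

/-- A minimal vertex cover: no proper subset is a vertex cover. -/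
def isMinimalVertexCover {L : ℕ} (G : SimpleGraph (Fin L)) (Q : Set (Fin L)) : Prop :=
  isVertexCover G Q ∧ ∀ Q' ⊆ Q, isVertexCover G Q' → Q' = Q


/-! The dynamics switches a cell on exactly when it has a neighbour that is off. Hence `x` is fixed
iff every off cell has only on neighbours, i.e. the on cells form a vertex cover, and every on cell
has an off neighbour, which is precisely the condition that no on cell can be removed from the
cover. -/

section VertexCover

variable {L : ℕ} (G : SimpleGraph (Fin L))

theorem isVertexCover_iff_forall_adj_mem {Q : Set (Fin L)} :
    isVertexCover G Q ↔ ∀ i ∉ Q, ∀ j, G.Adj i j → j ∈ Q :=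
  forall_congr' fun i => by simp only [or_iff_not_imp_left]; tauto

variable {G}

theorem isVertexCover.diff_singleton {Q : Set (Fin L)} (hQ : isVertexCover G Q) {i : Fin L}
    (hi : ∀ j, G.Adj i j → j ∈ Q) : isVertexCover G (Q \ {i}) := by
  intro a b hab
  have hba : b ≠ a := G.ne_of_adj hab |>.symm
  by_cases ha : a = i
  · subst ha
    exact Or.inr ⟨hi b hab, hba⟩
  by_cases hb : b = i
  · subst hb
    exact Or.inl ⟨hi a hab.symm, hba.symm⟩
  · exact (hQ a b hab).imp (fun h => ⟨h, ha⟩) (fun h => ⟨h, hb⟩)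

theorem isMinimalVertexCover_iff {Q : Set (Fin L)} :
    isMinimalVertexCover G Q ↔ isVertexCover G Q ∧ ∀ i ∈ Q, ∃ j, G.Adj i j ∧ j ∉ Q := by
  refine and_congr_right fun hQ => ⟨fun hmin i hi => ?_, fun hpriv Q' hQ' hcov => ?_⟩
  · by_contra! hall
    have hsmaller := hmin _ Set.sdiff_subset (hQ.diff_singleton hall)
    have hi' : i ∈ Q \ {i} := by rw [hsmaller]; exact hi
    exact hi'.2 rfl
  · refine hQ'.antisymm fun i hi => by_contra fun hi' => ?_
    obtain ⟨j, hij, hj⟩ := hpriv i hi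
    exact (hcov i j hij).elim hi' fun hj' => hj (hQ' hj')

end VertexCover

theorem Nsys_eq_self_iff {L : ℕ} (G : SimpleGraph (Fin L)) [DecidableRel G.Adj]
    (x : Fin L → Bool) : Nsys G x = x ↔ ∀ i, x i = true ↔ ∃ j, G.Adj i j ∧ x j = false := by
  refine funext_iff.trans (forall_congr' fun i => ?_)
  rw [Nsys, Bool.eq_iff_iff, decide_eq_true_iff]
  exact Iff.comm

theorem stmt3_general {L : ℕ} (G : SimpleGraph (Fin L)) [DecidableRel G.Adj]
    (x : Fin L → Bool) :
    Nsys G x = x ↔ isMinimalVertexCover G {i | x i = true} := by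
  simp only [Nsys_eq_self_iff, isMinimalVertexCover_iff, isVertexCover_iff_forall_adj_mem,
    Set.mem_ofPred_eq, Bool.not_eq_true]
  constructor
  · intro hfix
    refine ⟨fun i hi j hij => ?_, fun i hi => (hfix i).1 hi⟩
    cases hj : x j
    · simpa [hi] using (hfix i).2 ⟨j, hij, hj⟩
    · rfl
  · rintro ⟨hcov, hpriv⟩ i
    refine ⟨hpriv i, fun ⟨j, hij, hj⟩ => by_contra fun hi => ?_⟩
    simpa [hj] using hcov i (Bool.eq_false_iff.mpr hi) j hij

theorem stmt3 {L : ℕ} (G : SimpleGraph (Fin L)) [DecidableRel G.Adj]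
    (hc : G.Connected) (x : Fin L → Bool) :
    Nsys G x = x ↔ isMinimalVertexCover G {i | x i = true} :=
  stmt3_general G x
end

section
/- The asynchronous state transition graph of the reduced Boolean Delta-Notch system N contains no cyclic path: the energy function E(x) = -(1/2) xᵀ A x + bᵀ x, where A_{ij} = -1 if j ∈ S(i) and 0 otherwise, and b_i = -|S(i)| + 1/2, is strictly decreasing along every edge of the asynchronous dynamics. -/
/-- The energy function `E(x) = -(1/2) xᵀ A x + bᵀ x`, where `A_{ij} = -1` if `j ∈ S(i)`
and `0` otherwise, and `b_i = -|S(i)| + 1/2`. -/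
noncomputable def energy {L : ℕ} (G : SimpleGraph (Fin L)) [DecidableRel G.Adj]
    (x : Fin L → Bool) : ℝ :=
  -(1 / 2) * ∑ i, ∑ j, (if G.Adj i j then (-1 : ℝ) else 0) *
      (if x i then (1 : ℝ) else 0) * (if x j then (1 : ℝ) else 0)
    + ∑ i, (-(G.degree i : ℝ) + 1 / 2) * (if x i then (1 : ℝ) else 0)

/-!
Rewritten as `E(x) = ½ xᵀ (adjacency) x + ∑ᵢ (½ - deg i) xᵢ`, the energy changes by
`±(½ - m)` when coordinate `i` is flipped, where `m` counts the neighbours `j` with `xⱼ = 0`.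
An asynchronous step switches `i` on only when `m ≥ 1` and off only when `m = 0`, so the energy
drops by at least `½` along every edge, and a cycle would make it smaller than itself.
-/

open Matrix Finset

theorem Matrix.dotProduct_mulVec_add_single {ι R : Type*} [Fintype ι] [DecidableEq ι]
    [CommRing R] {A : Matrix ι ι R} (hA : A.IsSymm) (v : ι → R) (i : ι) (d : R) :
    (v + Pi.single i d) ⬝ᵥ A *ᵥ (v + Pi.single i d)
      = v ⬝ᵥ A *ᵥ v + d * (2 * (A *ᵥ v) i + d * A i i) := by
  have hsym : v ⬝ᵥ A *ᵥ Pi.single i d = d * (A *ᵥ v) i := by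
    rw [dotProduct_mulVec, dotProduct_single, ← vecMul_transpose, hA.eq, mul_comm]
  have hdiag : (A *ᵥ Pi.single i d) i = A i i * d := dotProduct_single _ _ _
  simp only [mulVec_add, dotProduct_add, add_dotProduct, hsym, single_dotProduct, hdiag]
  ring

theorem Relation.not_transGen_self_of_lt {α β : Type*} [Preorder β] {r : α → α → Prop}
    (f : α → β) (hf : ∀ a b, r a b → f b < f a) (a : α) : ¬ Relation.TransGen r a a := by
  intro h
  have h' := Relation.TransGen.lift (p := (· > ·)) f hf a a h
  rw [Relation.transGen_eq_self] at h'
  exact lt_irrefl _ h'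

def boolVec {ι : Type*} (x : ι → Bool) : ι → ℝ := fun i => if x i then 1 else 0

theorem boolVec_update_not {ι : Type*} [DecidableEq ι] (x : ι → Bool) (i : ι) :
    boolVec (Function.update x i (!x i)) = boolVec x + Pi.single i (if x i then -1 else 1) := by
  ext j
  rcases eq_or_ne j i with rfl | hji
  · cases h : x j <;> simp [boolVec, h]
  · simp [boolVec, hji]

section DeltaNotch

open SimpleGraph

variable {L : ℕ} (G : SimpleGraph (Fin L)) [DecidableRel G.Adj]

theorem energy_eq_dotProduct (x : Fin L → Bool) :
    energy G x = 1 / 2 * (boolVec x ⬝ᵥ G.adjMatrix ℝ *ᵥ boolVec x)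
      + (fun i => 1 / 2 - (G.degree i : ℝ)) ⬝ᵥ boolVec x := by
  simp only [energy, dotProduct, mulVec, adjMatrix_apply, boolVec, Finset.mul_sum]
  congr 1
  · refine Finset.sum_congr rfl fun a _ => Finset.sum_congr rfl fun b _ => ?_
    split_ifs <;> ring
  · exact Finset.sum_congr rfl fun a _ => by ring

theorem SimpleGraph.adjMatrix_mulVec_boolVec_apply (x : Fin L → Bool) (i : Fin L) :
    (G.adjMatrix ℝ *ᵥ boolVec x) i = G.degree i - #{j ∈ G.neighborFinset i | x j = false} := by
  rw [adjMatrix_mulVec_apply, eq_sub_iff_add_eq, ← card_neighborFinset_eq_degree,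
    ← Finset.card_filter_add_card_filter_not (s := G.neighborFinset i) (fun j => x j = true)]
  simp [boolVec, Finset.sum_boole]

theorem Nsys_eq_true_iff (x : Fin L → Bool) (i : Fin L) :
    Nsys G x i = true ↔ 0 < #{j ∈ G.neighborFinset i | x j = false} := by
  simp [Nsys, Finset.card_pos, Finset.filter_nonempty_iff]

theorem energy_update_not (x : Fin L → Bool) (i : Fin L) :
    energy G (Function.update x i (!x i)) = energy G x
      + (if x i then -1 else 1) * (1 / 2 - #{j ∈ G.neighborFinset i | x j = false}) := by
  rw [energy_eq_dotProduct, energy_eq_dotProduct, boolVec_update_not,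
    dotProduct_mulVec_add_single (isSymm_adjMatrix G), dotProduct_add, dotProduct_single,
    adjMatrix_mulVec_boolVec_apply, adjMatrix_apply, if_neg G.irrefl]
  ring

theorem energy_lt_of_asyncStep {x y : Fin L → Bool} (h : asyncStep (Nsys G) x y) :
    energy G y < energy G x := by
  obtain ⟨i, hi, rfl⟩ := h
  rw [energy_update_not]
  set k := #{j ∈ G.neighborFinset i | x j = false}
  cases hxi : x i
  · have hk : 0 < k := (Nsys_eq_true_iff G x i).1 (by simpa [hxi] using hi)
    have hk' : (1 : ℝ) ≤ k := by exact_mod_cast hk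
    simp only [Bool.false_eq_true, if_false]
    linarith
  · have hk : k = 0 := by
      by_contra hk
      exact hi (by rw [hxi, Nsys_eq_true_iff]; omega)
    simp [hk]

end DeltaNotch

theorem stmt5_general {L : ℕ} (G : SimpleGraph (Fin L)) [DecidableRel G.Adj] :
    (∀ x y : Fin L → Bool, asyncStep (Nsys G) x y → energy G y < energy G x) ∧
      ∀ x : Fin L → Bool, ¬ Relation.TransGen (asyncStep (Nsys G)) x x :=
  ⟨fun _ _ => energy_lt_of_asyncStep G,
    Relation.not_transGen_self_of_lt (energy G) fun _ _ => energy_lt_of_asyncStep G⟩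

theorem stmt5 {L : ℕ} (G : SimpleGraph (Fin L)) [DecidableRel G.Adj]
    (hc : G.Connected) :
    (∀ x y : Fin L → Bool, asyncStep (Nsys G) x y → energy G y < energy G x) ∧
      ∀ x : Fin L → Bool, ¬ Relation.TransGen (asyncStep (Nsys G)) x x :=
  stmt5_general G
end

section
/- For every state x ∈ B^L that is not a fixed point of the reduced Boolean Delta-Notch system N, there is a path in the asynchronous dynamics of N from x to some fixed point of N. -/
/-!
A flip at a node `i` that is unstable for `N` either turns a `false` node with a `false` neighbour
`true`, which destroys at least one adjacent `false`–`false` pair and creates none, or turns a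
`true` node all of whose neighbours are `true` into `false`, which leaves the `false`–`false` pairs
as they are and lowers the number of `true` nodes. So the number of adjacent `false`–`false` pairs,
followed lexicographically by the number of `true` nodes, strictly decreases along some asynchronous
step out of every non-fixed state, and iterating such steps must end in a fixed point.
-/

open Finset Function

theorem Relation.exists_reflTransGen_of_exists_lt {α β : Type*} [Preorder β] [WellFoundedLT β]
    {r : α → α → Prop} {P : α → Prop} (f : α → β)
    (h : ∀ x, ¬ P x → ∃ y, r x y ∧ f y < f x) (x : α) :
    ∃ y, P y ∧ Relation.ReflTransGen r x y := by
  induction hfx : f x using WellFoundedLT.induction generalizing x with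
  | _ b ih =>
    subst hfx
    by_cases hPx : P x
    · exact ⟨x, hPx, .refl⟩
    · obtain ⟨y, hxy, hlt⟩ := h x hPx
      obtain ⟨z, hPz, hyz⟩ := ih (f y) hlt y rfl
      exact ⟨z, hPz, .head hxy hyz⟩

section Flips

variable {ι : Type*} [Fintype ι] [DecidableEq ι]

def trueNodes (x : ι → Bool) : Finset ι := {i | x i = true}

theorem trueNodes_update_false_ssubset {x : ι → Bool} {i : ι} (hi : x i = true) :
    trueNodes (update x i false) ⊂ trueNodes x := by
  refine ssubset_iff_of_subset (fun k hk => ?_) |>.2 ⟨i, ?_, ?_⟩ <;>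
    simp_all [trueNodes, update_apply]

end Flips

namespace Nsys

variable {L : ℕ} {G : SimpleGraph (Fin L)} [DecidableRel G.Adj]

theorem eq_true_iff {x : Fin L → Bool} {i : Fin L} :
    Nsys G x i = true ↔ ∃ j, G.Adj i j ∧ x j = false := by
  simp [Nsys]

theorem eq_false_iff {x : Fin L → Bool} {i : Fin L} :
    Nsys G x i = false ↔ ∀ j, G.Adj i j → x j = true := by
  simp [Nsys]

variable (G) in
def falsePairs (x : Fin L → Bool) : Finset (Fin L × Fin L) :=
  {p | G.Adj p.1 p.2 ∧ x p.1 = false ∧ x p.2 = false}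

theorem falsePairs_update_true_ssubset {x : Fin L → Bool} {i j : Fin L} (hij : G.Adj i j)
    (hi : x i = false) (hj : x j = false) :
    falsePairs G (update x i true) ⊂ falsePairs G x := by
  refine ssubset_iff_of_subset (fun p hp => ?_) |>.2 ⟨(i, j), ?_, ?_⟩ <;>
    simp_all [falsePairs, update_apply]

theorem falsePairs_update_false_eq {x : Fin L → Bool} {i : Fin L}
    (hnbr : ∀ j, G.Adj i j → x j = true) :
    falsePairs G (update x i false) = falsePairs G x := by
  ext ⟨j, k⟩
  simp only [falsePairs, mem_filter, mem_univ, true_and, update_apply]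
  -- a pair through `i` would give `i` a `false` neighbour, on either side
  have hj := fun h => hnbr j (G.adj_symm h)
  have hk := hnbr k
  by_cases hji : j = i <;> by_cases hki : k = i <;> subst_vars <;> simp_all

variable (G) in
def potential (x : Fin L → Bool) : ℕ ×ₗ ℕ :=
  toLex (#(falsePairs G x), #(trueNodes x))

theorem exists_asyncStep_potential_lt {x : Fin L → Bool} (hx : Nsys G x ≠ x) :
    ∃ y, asyncStep (Nsys G) x y ∧ potential G y < potential G x := by
  obtain ⟨i, hi⟩ := ne_iff.1 hx
  refine ⟨update x i (!x i), ⟨i, hi, rfl⟩, ?_⟩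
  cases hxi : x i
  · obtain ⟨j, hij, hj⟩ := eq_true_iff.1 (by simpa [hxi] using hi)
    exact Prod.Lex.toLex_lt_toLex.2 <| .inl <| card_lt_card <|
      falsePairs_update_true_ssubset hij hxi hj
  · have hnbr := eq_false_iff.1 (by simpa [hxi] using hi)
    exact Prod.Lex.toLex_lt_toLex.2 <| .inr
      ⟨congrArg card (falsePairs_update_false_eq hnbr),
        card_lt_card (trueNodes_update_false_ssubset hxi)⟩

end Nsys

theorem stmt6_general {L : ℕ} (G : SimpleGraph (Fin L)) [DecidableRel G.Adj]
    (x : Fin L → Bool) :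
    ∃ y : Fin L → Bool, Nsys G y = y ∧
      Relation.ReflTransGen (asyncStep (Nsys G)) x y :=
  Relation.exists_reflTransGen_of_exists_lt (Nsys.potential G)
    (fun _ hx => Nsys.exists_asyncStep_potential_lt hx) x

theorem stmt6 {L : ℕ} (G : SimpleGraph (Fin L)) [DecidableRel G.Adj]
    (hc : G.Connected) (x : Fin L → Bool) (hx : Nsys G x ≠ x) :
    ∃ y : Fin L → Bool, Nsys G y = y ∧
      Relation.ReflTransGen (asyncStep (Nsys G)) x y :=
  stmt6_general G x
end

section
/- For every state (n,d) ∈ B^{2L} that is not a fixed point of the full Boolean Delta-Notch system F, there is a path in the asynchronous dynamics of F from (n,d) to some fixed point of F. -/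
/-- The full Boolean Delta-Notch system over the cell graph `G`, on states in `B^{2L}`:
the Notch variable of cell `i` is indexed by `Sum.inl i`, the Delta variable by `Sum.inr i`.
Notch is activated by Delta in some neighbouring cell, Delta is inhibited by Notch in the
same cell. -/
def Fsys {L : ℕ} (G : SimpleGraph (Fin L)) [DecidableRel G.Adj]
    (x : Fin L ⊕ Fin L → Bool) : Fin L ⊕ Fin L → Bool :=
  Sum.elim (fun i => decide (∃ j, G.Adj i j ∧ x (Sum.inr j) = true))
    (fun i => !x (Sum.inl i))

/-!
The cells with Notch and Delta both on, the adjacent pairs of Delta-on cells, the cells whose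
closed neighbourhood carries no Delta, and the cells with Notch and Delta both off are all empty
exactly at the fixed points of `Fsys G` (whose Delta-on cells form a maximal independent set).
While one of them is nonempty, at most two asynchronous updates decrease the vector of their sizes
lexicographically: switch Delta off in a cell with both on; switch Notch on and then Delta off at
one end of a Delta-on edge; switch Notch off (if needed) and then Delta on in a cell whose closed
neighbourhood carries no Delta; switch Notch on in a cell with both off and a Delta-on neighbour.
Well-founded descent then reaches a fixed point.
-/

open Finset Function Relation

theorem exists_reflTransGen_of_descent {α β : Type*} [Preorder β] [WellFoundedLT β]
    {r : α → α → Prop} {P : α → Prop} (μ : α → β)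
    (h : ∀ x, P x ∨ ∃ y, ReflTransGen r x y ∧ μ y < μ x) (x : α) :
    ∃ y, P y ∧ ReflTransGen r x y := by
  induction x using (InvImage.wf μ wellFounded_lt).induction with
  | _ x ih =>
    rcases h x with hx | ⟨y, hxy, hy⟩
    · exact ⟨x, hx, .refl⟩
    · obtain ⟨z, hz, hyz⟩ := ih y hy
      exact ⟨z, hz, hxy.trans hyz⟩

theorem reflTransGen_asyncStep_update {ι : Type*} [DecidableEq ι] {f : (ι → Bool) → ι → Bool}
    {x : ι → Bool} {i : ι} {b : Bool} (hb : f x i = b) :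
    ReflTransGen (asyncStep f) x (update x i b) := by
  by_cases hx : x i = b
  · rw [← hx, update_eq_self]
  · obtain rfl : b = !x i := by cases b <;> simp_all
    exact .single ⟨i, hb ▸ Ne.symm hx, rfl⟩

namespace DeltaNotch

variable {L : ℕ} (G : SimpleGraph (Fin L)) [DecidableRel G.Adj] {x y : Fin L ⊕ Fin L → Bool}

def bothOn (x : Fin L ⊕ Fin L → Bool) : Finset (Fin L) := {i | x (.inl i) ∧ x (.inr i)}

def deltaEdges (x : Fin L ⊕ Fin L → Bool) : Finset (Fin L × Fin L) :=
  {p | G.Adj p.1 p.2 ∧ x (.inr p.1) ∧ x (.inr p.2)}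

def undominated (x : Fin L ⊕ Fin L → Bool) : Finset (Fin L) :=
  {i | x (.inr i) = false ∧ ∀ j, G.Adj i j → x (.inr j) = false}

def bothOff (x : Fin L ⊕ Fin L → Bool) : Finset (Fin L) :=
  {i | x (.inl i) = false ∧ x (.inr i) = false}

@[simp]
theorem mem_bothOn {i : Fin L} : i ∈ bothOn x ↔ x (.inl i) ∧ x (.inr i) := by
  simp [bothOn]

@[simp]
theorem mem_deltaEdges {p : Fin L × Fin L} :
    p ∈ deltaEdges G x ↔ G.Adj p.1 p.2 ∧ x (.inr p.1) ∧ x (.inr p.2) := by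
  simp [deltaEdges]

@[simp]
theorem mem_undominated {i : Fin L} :
    i ∈ undominated G x ↔ x (.inr i) = false ∧ ∀ j, G.Adj i j → x (.inr j) = false := by
  simp [undominated]

@[simp]
theorem mem_bothOff {i : Fin L} : i ∈ bothOff x ↔ x (.inl i) = false ∧ x (.inr i) = false := by
  simp [bothOff]

def potential (x : Fin L ⊕ Fin L → Bool) : ℕ ×ₗ ℕ ×ₗ ℕ ×ₗ ℕ :=
  toLex (#(bothOn x), toLex (#(deltaEdges G x), toLex (#(undominated G x), #(bothOff x))))

theorem potential_lt_of_bothOn (h : bothOn y ⊂ bothOn x) : potential G y < potential G x := by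
  have := card_lt_card h
  simp only [potential, Prod.Lex.toLex_lt_toLex']
  omega

theorem potential_lt_of_deltaEdges (h₁ : bothOn y ⊆ bothOn x)
    (h₂ : deltaEdges G y ⊂ deltaEdges G x) : potential G y < potential G x := by
  have := card_le_card h₁
  have := card_lt_card h₂
  simp only [potential, Prod.Lex.toLex_lt_toLex']
  omega

theorem potential_lt_of_undominated (h₁ : bothOn y ⊆ bothOn x)
    (h₂ : deltaEdges G y ⊆ deltaEdges G x) (h₃ : undominated G y ⊂ undominated G x) :
    potential G y < potential G x := by
  have := card_le_card h₁
  have := card_le_card h₂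
  have := card_lt_card h₃
  simp only [potential, Prod.Lex.toLex_lt_toLex']
  omega

theorem potential_lt_of_bothOff (h₁ : bothOn y ⊆ bothOn x)
    (h₂ : deltaEdges G y ⊆ deltaEdges G x) (h₃ : undominated G y ⊆ undominated G x)
    (h₄ : bothOff y ⊂ bothOff x) : potential G y < potential G x := by
  have := card_le_card h₁
  have := card_le_card h₂
  have := card_le_card h₃
  have := card_lt_card h₄
  simp only [potential, Prod.Lex.toLex_lt_toLex']
  omega

def CanDescend (x : Fin L ⊕ Fin L → Bool) : Prop :=
  ∃ y, ReflTransGen (asyncStep (Fsys G)) x y ∧ potential G y < potential G x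

theorem canDescend_of_mem_bothOn {i : Fin L} (hi : i ∈ bothOn x) : CanDescend G x := by
  rw [mem_bothOn] at hi
  refine ⟨update x (.inr i) false, reflTransGen_asyncStep_update (by simp [Fsys, hi.1]),
    potential_lt_of_bothOn G
      ((ssubset_iff_of_subset fun k hk => ?_).2 ⟨i, by simpa using hi, by simp⟩)⟩
  grind [mem_bothOn, update_apply]

theorem canDescend_of_mem_deltaEdges {p : Fin L × Fin L} (hp : p ∈ deltaEdges G x) :
    CanDescend G x := by
  obtain ⟨i, j⟩ := p
  obtain ⟨hij, hi, hj⟩ := (mem_deltaEdges G).1 hp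
  let x₁ := update x (.inl j) true
  have hx₁ : ReflTransGen (asyncStep (Fsys G)) x x₁ :=
    reflTransGen_asyncStep_update (by simpa [Fsys] using ⟨i, hij.symm, hi⟩)
  refine ⟨update x₁ (.inr j) false,
    hx₁.trans (reflTransGen_asyncStep_update (by simp [x₁, Fsys])),
    potential_lt_of_deltaEdges G (fun k hk => ?_)
      ((ssubset_iff_of_subset fun k hk => ?_).2 ⟨(i, j), hp, by simp [x₁]⟩)⟩
  all_goals grind [mem_bothOn, mem_deltaEdges, update_apply]

theorem canDescend_of_mem_undominated {i : Fin L} (hi : i ∈ undominated G x) :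
    CanDescend G x := by
  obtain ⟨hi, hnbr⟩ := (mem_undominated G).1 hi
  let x₁ := update x (.inl i) false
  have hx₁ : ReflTransGen (asyncStep (Fsys G)) x x₁ :=
    reflTransGen_asyncStep_update (by simpa [Fsys] using fun j hj => by simp [hnbr j hj])
  refine ⟨update x₁ (.inr i) true,
    hx₁.trans (reflTransGen_asyncStep_update (by simp [x₁, Fsys])),
    potential_lt_of_undominated G (fun k hk => ?_) (fun k hk => ?_)
      ((ssubset_iff_of_subset fun k hk => ?_).2 ⟨i, by simpa using ⟨hi, hnbr⟩, by simp [x₁]⟩)⟩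
  all_goals grind [mem_bothOn, mem_deltaEdges, mem_undominated, update_apply,
    SimpleGraph.Adj.symm, SimpleGraph.irrefl]

theorem canDescend_of_mem_bothOff {i : Fin L} (hi : i ∈ bothOff x) (hu : i ∉ undominated G x) :
    CanDescend G x := by
  rw [mem_bothOff] at hi
  obtain ⟨j, hij, hj⟩ : ∃ j, G.Adj i j ∧ x (.inr j) := by simpa [hi.2] using hu
  refine ⟨update x (.inl i) true,
    reflTransGen_asyncStep_update (by simpa [Fsys] using ⟨j, hij, hj⟩),
    potential_lt_of_bothOff G (fun k hk => ?_) (fun k hk => ?_) (fun k hk => ?_)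
      ((ssubset_iff_of_subset fun k hk => ?_).2 ⟨i, by simpa using hi, by simp⟩)⟩
  all_goals grind [mem_bothOn, mem_deltaEdges, mem_undominated, mem_bothOff, update_apply]

theorem fsys_eq_self_of_eq_empty (h₁ : bothOn x = ∅) (h₂ : deltaEdges G x = ∅)
    (h₃ : undominated G x = ∅) (h₄ : bothOff x = ∅) : Fsys G x = x := by
  simp only [eq_empty_iff_forall_notMem, mem_bothOn, mem_deltaEdges, mem_undominated,
    mem_bothOff, Prod.forall, not_and, not_forall] at h₁ h₂ h₃ h₄
  have hd : ∀ i, x (.inr i) = !x (.inl i) := fun i => by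
    cases h : x (.inl i) <;> simp_all
  funext k
  rcases k with i | i
  · cases hn : x (.inl i)
    · simpa [Fsys] using fun j hij => by simpa [hd, hn] using h₂ i j hij
    · simpa [Fsys] using h₃ i (by simp [hd, hn])
  · simp [Fsys, hd]

theorem fixed_or_canDescend (x : Fin L ⊕ Fin L → Bool) : Fsys G x = x ∨ CanDescend G x := by
  by_cases h₁ : (bothOn x).Nonempty
  · exact .inr (canDescend_of_mem_bothOn G h₁.choose_spec)
  by_cases h₂ : (deltaEdges G x).Nonempty
  · exact .inr (canDescend_of_mem_deltaEdges G h₂.choose_spec)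
  by_cases h₃ : (undominated G x).Nonempty
  · exact .inr (canDescend_of_mem_undominated G h₃.choose_spec)
  by_cases h₄ : (bothOff x).Nonempty
  · obtain ⟨i, hi⟩ := h₄
    exact .inr (canDescend_of_mem_bothOff G hi fun hu => h₃ ⟨i, hu⟩)
  rw [not_nonempty_iff_eq_empty] at h₁ h₂ h₃ h₄
  exact .inl (fsys_eq_self_of_eq_empty G h₁ h₂ h₃ h₄)

end DeltaNotch

theorem stmt7_general {L : ℕ} (G : SimpleGraph (Fin L)) [DecidableRel G.Adj]
    (x : Fin L ⊕ Fin L → Bool) :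
    ∃ y : Fin L ⊕ Fin L → Bool, Fsys G y = y ∧
      Relation.ReflTransGen (asyncStep (Fsys G)) x y :=
  exists_reflTransGen_of_descent (DeltaNotch.potential G) (DeltaNotch.fixed_or_canDescend G) x

theorem stmt7 {L : ℕ} (G : SimpleGraph (Fin L)) [DecidableRel G.Adj]
    (hc : G.Connected) (x : Fin L ⊕ Fin L → Bool) (hx : Fsys G x ≠ x) :
    ∃ y : Fin L ⊕ Fin L → Bool, Fsys G y = y ∧
      Relation.ReflTransGen (asyncStep (Fsys G)) x y :=
  stmt7_general G x
end

section
/- Every fixed point x ∈ B^L of the reduced Boolean Delta-Notch system N is reachable in the asynchronous dynamics of N both from the all-ones state and from the all-zeros state. -/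
open Function Relation

section AsyncStep

variable {ι : Type*} [Fintype ι] [DecidableEq ι]

theorem hammingDist_update_lt {β : ι → Type*} [∀ i, DecidableEq (β i)] {z x : ∀ i, β i} {i : ι}
    (hi : z i ≠ x i) : hammingDist (update z i (x i)) x < hammingDist z x := by
  refine Finset.card_lt_card ⟨fun j hj => ?_, fun hsub => ?_⟩
  · have hji : j ≠ i := by rintro rfl; simp at hj
    simpa [update_of_ne hji] using hj
  · simpa using hsub (Finset.mem_filter.mpr ⟨Finset.mem_univ i, hi⟩)

theorem reflTransGen_asyncStep_of_invariant {f : (ι → Bool) → ι → Bool} {x : ι → Bool}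
    {P : (ι → Bool) → Prop} (hP : ∀ z, P z → ∀ i, P (update z i (x i)))
    (hflip : ∀ z, P z → ∀ i, z i ≠ x i → f z i ≠ z i) :
    ∀ z, P z → ReflTransGen (asyncStep f) z x := by
  intro z hz
  induction hd : hammingDist z x using Nat.strong_induction_on generalizing z with
  | _ n ih =>
    by_cases hzx : z = x
    · exact hzx ▸ ReflTransGen.refl
    obtain ⟨i, hi⟩ := Function.ne_iff.mp hzx
    refine ReflTransGen.head ⟨i, hflip z hz i hi, by rw [Bool.eq_not.mpr hi.symm]⟩
      (ih _ (hd ▸ hammingDist_update_lt hi) _ (hP z hz i) rfl)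

variable {f : (ι → Bool) → ι → Bool} {x : ι → Bool}

theorem Antitone.reflTransGen_asyncStep_of_le (hf : Antitone f) (hx : f x = x) {y : ι → Bool}
    (hy : x ≤ y) : ReflTransGen (asyncStep f) y x := by
  refine reflTransGen_asyncStep_of_invariant (P := (x ≤ ·))
    (fun z hz i => le_update_iff.mpr ⟨le_rfl, fun j _ => hz j⟩) (fun z hz i hi => ?_) y hy
  obtain ⟨hxi, hzi⟩ := Bool.lt_iff.mp ((hz i).lt_of_ne' hi)
  have hfz : f z i = false := Bool.eq_false_of_le_false (by simpa [hx, hxi] using hf hz i)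
  simp [hfz, hzi]

theorem Antitone.reflTransGen_asyncStep_of_ge (hf : Antitone f) (hx : f x = x) {y : ι → Bool}
    (hy : y ≤ x) : ReflTransGen (asyncStep f) y x := by
  refine reflTransGen_asyncStep_of_invariant (P := (· ≤ x))
    (fun z hz i => update_le_iff.mpr ⟨le_rfl, fun j _ => hz j⟩) (fun z hz i hi => ?_) y hy
  obtain ⟨hzi, hxi⟩ := Bool.lt_iff.mp ((hz i).lt_of_ne hi)
  have hfz : f z i = true := top_le_iff.mp (by simpa [hx, hxi] using hf hz i)
  simp [hfz, hzi]

end AsyncStep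

theorem Nsys_antitone {L : ℕ} (G : SimpleGraph (Fin L)) [DecidableRel G.Adj] :
    Antitone (Nsys G) := by
  intro y z hyz i
  simp only [Nsys, Bool.le_iff_imp, decide_eq_true_eq]
  exact fun ⟨j, hij, hj⟩ => ⟨j, hij, Bool.eq_false_of_le_false (hj ▸ hyz j)⟩

theorem stmt8_general {L : ℕ} (G : SimpleGraph (Fin L)) [DecidableRel G.Adj]
    (x : Fin L → Bool) (hx : Nsys G x = x) :
    Relation.ReflTransGen (asyncStep (Nsys G)) (fun _ => true) x ∧
      Relation.ReflTransGen (asyncStep (Nsys G)) (fun _ => false) x :=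
  ⟨(Nsys_antitone G).reflTransGen_asyncStep_of_le hx fun _ => le_top,
    (Nsys_antitone G).reflTransGen_asyncStep_of_ge hx fun _ => bot_le⟩

theorem stmt8 {L : ℕ} (G : SimpleGraph (Fin L)) [DecidableRel G.Adj]
    (hc : G.Connected) (x : Fin L → Bool) (hx : Nsys G x = x) :
    Relation.ReflTransGen (asyncStep (Nsys G)) (fun _ => true) x ∧
      Relation.ReflTransGen (asyncStep (Nsys G)) (fun _ => false) x :=
  stmt8_general G x hx
end

section
/- The subspace x[I] is a trap space for the reduced Boolean Delta-Notch system N if and only if the subspace (x, x̄)[I ∪ (I+L)] is a trap space for the full Boolean Delta-Notch system F, where (x, x̄) denotes the state of B^{2L} whose Notch part is x and Delta part is the negation of x, and I+L = {i+L : i ∈ I}. -/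
/-- A trap set: a set closed under the asynchronous dynamics. -/
def isTrapSet {ι : Type*} [DecidableEq ι] (f : (ι → Bool) → (ι → Bool))
    (A : Set (ι → Bool)) : Prop :=
  ∀ x ∈ A, ∀ y, asyncStep f x y → y ∈ A

/-!
The Delta layer of `F` is slaved to the Notch layer: `F_{i+L}(n, d) = ¬nᵢ`, so on
`(x, x̄)[I ∪ (I+L)]` the fixed Delta coordinates are never updated, while `Fᵢ(n, d) = Nᵢ(¬d)`.
A subspace is a trap space iff the network leaves each of its fixed coordinates unchanged at
each of its points, and the maps `(n, d) ↦ ¬d` and `n ↦ (n, ¬n)` carry the two subspaces into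
each other, turning one such condition into the other.
-/

/-- The paper's `z[J]`. -/
def subcube {ι : Type*} (z : ι → Bool) (J : Set ι) : Set (ι → Bool) :=
  {y | ∀ j ∉ J, y j = z j}

theorem isTrapSet_subcube_iff {ι : Type*} [DecidableEq ι] (f : (ι → Bool) → (ι → Bool))
    (z : ι → Bool) (J : Set ι) :
    isTrapSet f (subcube z J) ↔ ∀ y ∈ subcube z J, ∀ j ∉ J, f y j = y j := by
  constructor
  · intro h y hy j hj
    by_contra hne
    have hflipped := h y hy _ ⟨j, hne, rfl⟩ j hj
    rw [Function.update_self, ← hy j hj] at hflipped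
    simp at hflipped
  · rintro h y hy _ ⟨i, hfi, rfl⟩ j hj
    rcases eq_or_ne j i with rfl | hne
    · exact absurd (h y hy j hj) hfi
    · rw [Function.update_of_ne hne]
      exact hy j hj

theorem Sum.forall_notMem_image_inl_union_image_inr {α β : Type*} (I : Set α) (J : Set β)
    (p : α ⊕ β → Prop) :
    (∀ j ∉ Sum.inl '' I ∪ Sum.inr '' J, p j) ↔
      (∀ i ∉ I, p (Sum.inl i)) ∧ ∀ i ∉ J, p (Sum.inr i) := by
  simp only [Sum.forall, Set.mem_union, Set.mem_image, Sum.inl.injEq, Sum.inr.injEq, reduceCtorEq,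
    and_false, exists_false, exists_eq_right, or_false, false_or]

theorem subcube_sumElim {α β : Type*} (a : α → Bool) (b : β → Bool) (I : Set α) (J : Set β) :
    subcube (Sum.elim a b) (Sum.inl '' I ∪ Sum.inr '' J) =
      {y | (∀ i ∉ I, y (Sum.inl i) = a i) ∧ ∀ i ∉ J, y (Sum.inr i) = b i} :=
  Set.ext fun y => Sum.forall_notMem_image_inl_union_image_inr I J fun j => y j = Sum.elim a b j

theorem Fsys_inl {L : ℕ} (G : SimpleGraph (Fin L)) [DecidableRel G.Adj]
    (y : Fin L ⊕ Fin L → Bool) (i : Fin L) :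
    Fsys G y (Sum.inl i) = Nsys G (fun k => !y (Sum.inr k)) i := by
  simp [Fsys, Nsys]

theorem Fsys_inr {L : ℕ} (G : SimpleGraph (Fin L)) [DecidableRel G.Adj]
    (y : Fin L ⊕ Fin L → Bool) (i : Fin L) :
    Fsys G y (Sum.inr i) = !y (Sum.inl i) :=
  rfl

theorem stmt11_general {L : ℕ} (G : SimpleGraph (Fin L)) [DecidableRel G.Adj]
    (x : Fin L → Bool) (I : Set (Fin L)) :
    isTrapSet (Nsys G) {y | ∀ i ∉ I, y i = x i} ↔
      isTrapSet (Fsys G)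
        {y | (∀ i ∉ I, y (Sum.inl i) = x i) ∧ (∀ i ∉ I, y (Sum.inr i) = !x i)} := by
  rw [← subcube_sumElim]
  change isTrapSet _ (subcube x I) ↔ _
  rw [isTrapSet_subcube_iff, isTrapSet_subcube_iff, subcube_sumElim]
  simp only [subcube, Sum.forall_notMem_image_inl_union_image_inr, Set.mem_ofPred_eq, Fsys_inl,
    Fsys_inr]
  constructor
  · rintro hN y ⟨hyl, hyr⟩
    have hn : ∀ k ∉ I, (!y (Sum.inr k)) = x k := fun k hk => by simp [hyr k hk]
    exact ⟨fun i hi => by rw [hN _ hn i hi, hn i hi, hyl i hi],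
      fun i hi => by rw [hyl i hi, hyr i hi]⟩
  · intro hF n hn i hi
    simpa using (hF (Sum.elim n fun k => !n k) ⟨hn, fun k hk => by simp [hn k hk]⟩).1 i hi

theorem stmt11 {L : ℕ} (G : SimpleGraph (Fin L)) [DecidableRel G.Adj]
    (hc : G.Connected) (x : Fin L → Bool) (I : Set (Fin L)) :
    isTrapSet (Nsys G) {y | ∀ i ∉ I, y i = x i} ↔
      isTrapSet (Fsys G)
        {y | (∀ i ∉ I, y (Sum.inl i) = x i) ∧ (∀ i ∉ I, y (Sum.inr i) = !x i)} :=
  stmt11_general G x I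
end

section
/- Let x ∈ B^L, and let I ⊆ {1,...,L} be such that the induced subgraph G_I is connected, x_i = 0 for all i ∈ I, and x_h = 1 for all h ∈ S(I) ∩ I^c. Then no state y ∈ B^L with y_i = 1 for all i ∈ I is reachable from x in the asynchronous dynamics of the reduced Boolean Delta-Notch system N. -/
/-!
The states in which some cell of `I` is `0` and every `0`-cell of `I` sees only `1`s outside `I`
form a trap set. A cell can only turn `0 → 1` when it has a `0`-neighbour, and a `0`-cell of `I`
turning on has its `0`-neighbours inside `I`, so `I` never loses its last `0`; a cell can only
turn `1 → 0` when all its neighbours are `1`, so no `0`-cell of `I` is ever exposed across the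
boundary. The initial state lies in this trap set, while a state equal to `1` on `I` does not.
-/

theorem isTrapSet.mem_of_reflTransGen {ι : Type*} [DecidableEq ι]
    {f : (ι → Bool) → (ι → Bool)} {A : Set (ι → Bool)} (hA : isTrapSet f A)
    {x y : ι → Bool} (hx : x ∈ A) (hxy : Relation.ReflTransGen (asyncStep f) x y) : y ∈ A := by
  induction hxy with
  | refl => exact hx
  | tail _ hstep ih => exact hA _ ih _ hstep

section DeltaNotch

variable {L : ℕ} {G : SimpleGraph (Fin L)} [DecidableRel G.Adj]

theorem exists_adj_false_of_Nsys_ne {n : Fin L → Bool} {k : Fin L}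
    (hk : Nsys G n k ≠ n k) (hnk : n k = false) : ∃ j, G.Adj k j ∧ n j = false := by
  simpa [Nsys, hnk] using hk

theorem adj_true_of_Nsys_ne {n : Fin L → Bool} {k : Fin L}
    (hk : Nsys G n k ≠ n k) (hnk : n k = true) {j : Fin L} (hkj : G.Adj k j) : n j = true := by
  simp only [Nsys, hnk, ne_eq, decide_eq_true_eq, not_exists, not_and,
    Bool.not_eq_false] at hk
  exact hk j hkj

variable (G) in
def shieldedStates (I : Set (Fin L)) : Set (Fin L → Bool) :=
  {n | ∀ i ∈ I, ∀ j ∉ I, G.Adj i j → n i = false → n j = true}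

theorem isTrapSet_shieldedStates (I : Set (Fin L)) :
    isTrapSet (Nsys G) (shieldedStates G I) := by
  rintro n hn _ ⟨k, hk, rfl⟩ i hi j hj hij hmi
  by_cases hjk : j = k
  · subst hjk
    rw [Function.update_of_ne (G.ne_of_adj hij)] at hmi
    cases hnj : n j
    · simp
    · exact absurd (adj_true_of_Nsys_ne hk hnj hij.symm) (by simp [hmi])
  · rw [Function.update_of_ne hjk]
    by_cases hik : i = k
    · subst hik
      rw [Function.update_self, Bool.not_eq_false'] at hmi
      exact adj_true_of_Nsys_ne hk hmi hij
    · rw [Function.update_of_ne hik] at hmi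
      exact hn i hi j hj hij hmi

theorem exists_false_of_asyncStep {I : Set (Fin L)} {n m : Fin L → Bool}
    (hn : n ∈ shieldedStates G I) (hstep : asyncStep (Nsys G) n m)
    (hlow : ∃ i ∈ I, n i = false) : ∃ i ∈ I, m i = false := by
  obtain ⟨k, hk, rfl⟩ := hstep
  obtain ⟨i, hi, hni⟩ := hlow
  by_cases hik : i = k
  · subst hik
    obtain ⟨j, hij, hnj⟩ := exists_adj_false_of_Nsys_ne hk hni
    have hjI : j ∈ I := by
      by_contra hjI
      simpa [hnj] using hn i hi j hjI hij hni
    exact ⟨j, hjI, by rwa [Function.update_of_ne (G.ne_of_adj hij).symm]⟩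
  · exact ⟨i, hi, by rwa [Function.update_of_ne hik]⟩

theorem isTrapSet_lowShieldedStates (I : Set (Fin L)) :
    isTrapSet (Nsys G) ({n | ∃ i ∈ I, n i = false} ∩ shieldedStates G I) :=
  fun _ ⟨hlow, hn⟩ _ hstep =>
    ⟨exists_false_of_asyncStep hn hstep hlow, isTrapSet_shieldedStates I _ hn _ hstep⟩

end DeltaNotch

theorem stmt12_general {L : ℕ} (G : SimpleGraph (Fin L)) [DecidableRel G.Adj]
    (x : Fin L → Bool) (I : Set (Fin L))
    (hconn : (G.induce I).Connected)
    (hx0 : ∀ i ∈ I, x i = false)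
    (hx1 : ∀ h ∉ I, (∃ i ∈ I, G.Adj i h) → x h = true)
    (y : Fin L → Bool) (hy : ∀ i ∈ I, y i = true) :
    ¬ Relation.ReflTransGen (asyncStep (Nsys G)) x y := by
  intro hreach
  obtain ⟨⟨i, hi⟩⟩ := hconn.nonempty
  have hx : x ∈ {n | ∃ i ∈ I, n i = false} ∩ shieldedStates G I :=
    ⟨⟨i, hi, hx0 i hi⟩, fun i hi j hj hij _ => hx1 j hj ⟨i, hi, hij⟩⟩
  obtain ⟨⟨j, hj, hyj⟩, -⟩ := (isTrapSet_lowShieldedStates I).mem_of_reflTransGen hx hreach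
  simp [hy j hj] at hyj

theorem stmt12 {L : ℕ} (G : SimpleGraph (Fin L)) [DecidableRel G.Adj]
    (hc : G.Connected) (x : Fin L → Bool) (I : Set (Fin L))
    (hconn : (G.induce I).Connected)
    (hx0 : ∀ i ∈ I, x i = false)
    (hx1 : ∀ h ∉ I, (∃ i ∈ I, G.Adj i h) → x h = true)
    (y : Fin L → Bool) (hy : ∀ i ∈ I, y i = true) :
    ¬ Relation.ReflTransGen (asyncStep (Nsys G)) x y :=
  stmt12_general G x I hconn hx0 hx1 y hy
end

section
/- Let x ∈ B^L and I ⊆ {1,...,L} be such that the induced subgraph G_I is connected and x_i = 0 for all i ∈ I. Then for every i ∈ I and every J ⊆ I \ {i}, there is a path in the asynchronous dynamics of N from x to the state x̄^J obtained from x by flipping all coordinates in J. -/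
lemma SimpleGraph.Reachable.exists_adj_dist_lt {V : Type*} {H : SimpleGraph V} {u v : V}
    (h : H.Reachable u v) (hne : u ≠ v) : ∃ w, H.Adj v w ∧ H.dist u w < H.dist u v := by
  obtain ⟨p, hp⟩ := h.exists_walk_length_eq_dist
  have hnil : ¬ p.Nil := Walk.not_nil_of_ne hne
  refine ⟨p.penultimate, (p.adj_penultimate hnil).symm, ?_⟩
  have := dist_le p.dropLast
  have := p.length_dropLast_add_one hnil
  omega

lemma asyncStep_Nsys_update_true {L : ℕ} {G : SimpleGraph (Fin L)} [DecidableRel G.Adj]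
    {z : Fin L → Bool} {a k : Fin L} (hza : z a = false) (hadj : G.Adj a k) (hzk : z k = false) :
    asyncStep (Nsys G) z (Function.update z a true) :=
  ⟨a, by simpa [Nsys, hza] using ⟨k, hadj, hzk⟩, by simp [hza]⟩

lemma reflTransGen_asyncStep_Nsys_ite_true {L : ℕ} {α : Type*} [LinearOrder α]
    (G : SimpleGraph (Fin L)) [DecidableRel G.Adj] (x : Fin L → Bool) (f : Fin L → α)
    (R : Finset (Fin L)) (hxR : ∀ a ∈ R, x a = false)
    (hdesc : ∀ a ∈ R, ∃ k, G.Adj a k ∧ x k = false ∧ f k < f a) :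
    Relation.ReflTransGen (asyncStep (Nsys G)) x (fun m => if m ∈ R then true else x m) := by
  induction R using Finset.induction_on_min_value f with
  | empty => exact .refl
  | insert a s has hmin ih =>
    have hs := ih (fun b hb => hxR b (Finset.mem_insert_of_mem hb))
      (fun b hb => hdesc b (Finset.mem_insert_of_mem hb))
    obtain ⟨k, hadj, hxk, hlt⟩ := hdesc a (Finset.mem_insert_self a s)
    have hks : k ∉ s := fun hk => (hmin k hk).not_gt hlt
    have hupdate : (fun m => if m ∈ insert a s then true else x m)
        = Function.update (fun m => if m ∈ s then true else x m) a true := by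
      funext m
      by_cases hm : m = a <;> simp [hm]
    rw [hupdate]
    refine hs.tail (asyncStep_Nsys_update_true ?_ hadj ?_)
    · simp [has, hxR a (Finset.mem_insert_self a s)]
    · simp [hks, hxk]

theorem stmt13_general {L : ℕ} (G : SimpleGraph (Fin L)) [DecidableRel G.Adj]
    (x : Fin L → Bool) (I : Set (Fin L))
    (hconn : (G.induce I).Connected)
    (hx0 : ∀ i ∈ I, x i = false)
    (i : Fin L) (hi : i ∈ I) (J : Set (Fin L)) (hJ : J ⊆ I \ {i})
    (y : Fin L → Bool) (hy1 : ∀ j ∈ J, y j = !x j) (hy2 : ∀ j ∉ J, y j = x j) :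
    Relation.ReflTransGen (asyncStep (Nsys G)) x y := by
  classical
  let D : Fin L → ℕ := fun m => if hm : m ∈ I then (G.induce I).dist ⟨i, hi⟩ ⟨m, hm⟩ else 0
  have hdesc : ∀ a ∈ J, ∃ k, G.Adj a k ∧ x k = false ∧ D k < D a := by
    intro a ha
    obtain ⟨haI, hai⟩ := hJ ha
    obtain ⟨⟨k, hkI⟩, hadj, hlt⟩ := (hconn.preconnected ⟨i, hi⟩ ⟨a, haI⟩).exists_adj_dist_lt
      (by simpa [eq_comm] using hai)
    exact ⟨k, hadj, hx0 k hkI, by simpa [D, hkI, haI] using hlt⟩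
  have hy : y = fun m => if m ∈ J.toFinset then true else x m := by
    funext m
    by_cases hm : m ∈ J
    · simp [hm, hy1 m hm, hx0 m (hJ hm).1]
    · simp [hm, hy2 m hm]
  rw [hy]
  exact reflTransGen_asyncStep_Nsys_ite_true G x D J.toFinset
    (fun a ha => hx0 a (hJ (Set.mem_toFinset.mp ha)).1)
    (fun a ha => hdesc a (Set.mem_toFinset.mp ha))

theorem stmt13 {L : ℕ} (G : SimpleGraph (Fin L)) [DecidableRel G.Adj]
    (hc : G.Connected) (x : Fin L → Bool) (I : Set (Fin L))
    (hconn : (G.induce I).Connected)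
    (hx0 : ∀ i ∈ I, x i = false)
    (i : Fin L) (hi : i ∈ I) (J : Set (Fin L)) (hJ : J ⊆ I \ {i})
    (y : Fin L → Bool) (hy1 : ∀ j ∈ J, y j = !x j) (hy2 : ∀ j ∉ J, y j = x j) :
    Relation.ReflTransGen (asyncStep (Nsys G)) x y :=
  stmt13_general G x I hconn hx0 i hi J hJ y hy1 hy2
end

section
/- Every fixed point x ∈ B^{2L} of the full Boolean Delta-Notch system F is reachable in the asynchronous dynamics of F from every state whose Notch part is homogeneous or whose Delta part is homogeneous, i.e., from every state (n,d) with n = 0, n = 1, d = 0 or d = 1 (constant vectors). -/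
/-!
An asynchronous run reaches `z` from `y` as soon as every coordinate on which they differ is
driven towards `z` at every state between `y` and `z`; for the Delta-Notch system this holds for
a phase updating only Notch (whose targets depend only on Delta) and for a phase updating only
Delta (whose targets depend only on Notch).

If the Notch part is constant `a`, one Delta phase makes Delta constant `!a`. From Delta constant
`c`, a Notch phase sets Notch to its target under `c`; a Delta phase then reaches the Delta part
of the fixed point `x` (for `c = true`, a cell whose Delta must drop to `false` has Notch `true`
in `x`, hence a neighbour, hence Notch `true` now), and a final Notch phase reaches `x`.
-/

open Relation

theorem reflTransGen_asyncStep_of_forall_mem_box {ι : Type*} [DecidableEq ι] [Fintype ι]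
    {f : (ι → Bool) → (ι → Bool)} {y z : ι → Bool}
    (h : ∀ w : ι → Bool, (∀ j, w j = y j ∨ w j = z j) → ∀ i, y i ≠ z i → f w i = z i) :
    ReflTransGen (asyncStep f) y z := by
  -- flip the disagreeing coordinates one at a time; each intermediate state stays in the box
  suffices ∀ s : Finset ι, ∀ y : ι → Bool, (∀ i ∉ s, y i = z i) →
      (∀ w : ι → Bool, (∀ j, w j = y j ∨ w j = z j) → ∀ i, y i ≠ z i → f w i = z i) →
      ReflTransGen (asyncStep f) y z from
    this Finset.univ y (fun i hi => absurd (Finset.mem_univ i) hi) h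
  intro s
  induction s using Finset.induction_on with
  | empty =>
    intro y hy _
    rw [funext fun i => hy i (Finset.notMem_empty i)]
  | insert i s _ ih =>
    intro y hy h
    have hy' : ∀ j ∉ s, Function.update y i (z i) j = z j := by
      intro j hj
      rw [Function.update_apply]
      split_ifs with hji
      · rw [hji]
      · exact hy j (by simp [hji, hj])
    have h' : ∀ w : ι → Bool, (∀ j, w j = Function.update y i (z i) j ∨ w j = z j) →
        ∀ j, Function.update y i (z i) j ≠ z j → f w j = z j := by
      intro w hw j hj
      have hji : j ≠ i := by rintro rfl; simp at hj
      rw [Function.update_of_ne hji] at hj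
      refine h w (fun k => ?_) j hj
      rcases eq_or_ne k i with rfl | hki
      · exact .inr ((hw k).elim (by simp [·]) id)
      · simpa [Function.update_of_ne hki] using hw k
    by_cases hyi : y i = z i
    · rw [Function.update_eq_self_iff.mpr hyi.symm] at hy' h'
      exact ih y hy' h'
    · have hstep : asyncStep f y (Function.update y i (z i)) :=
        ⟨i, by rw [h y (fun _ => .inl rfl) i hyi]; exact Ne.symm hyi,
          by rw [Bool.eq_not.mpr (Ne.symm hyi)]⟩
      exact ReflTransGen.head hstep (ih _ hy' h')

section DeltaNotch

variable {L : ℕ} (G : SimpleGraph (Fin L)) [DecidableRel G.Adj]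

def notchTarget (d : Fin L → Bool) (i : Fin L) : Bool :=
  decide (∃ j, G.Adj i j ∧ d j = true)

theorem Fsys_sumElim (n d : Fin L → Bool) :
    Fsys G (Sum.elim n d) = Sum.elim (notchTarget G d) (fun i => !n i) :=
  rfl

theorem Fsys_sumElim_eq_self_iff {n d : Fin L → Bool} :
    Fsys G (Sum.elim n d) = Sum.elim n d ↔ n = notchTarget G d ∧ d = fun i => !n i := by
  rw [Fsys_sumElim, Sum.elim_eq_iff, eq_comm, @eq_comm _ d]

theorem reflTransGen_update_notch {n n' d : Fin L → Bool}
    (h : ∀ i, n i ≠ n' i → n' i = notchTarget G d i) :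
    ReflTransGen (asyncStep (Fsys G)) (Sum.elim n d) (Sum.elim n' d) := by
  refine reflTransGen_asyncStep_of_forall_mem_box fun w hw i hi => ?_
  -- inside the box the Delta part is `d`, so the Notch targets do not move
  have hwd : w = Sum.elim (w ∘ Sum.inl) d :=
    (Sum.elim_comp_inl_inr w).symm.trans
      (congrArg _ (funext fun j => by simpa using hw (.inr j)))
  rcases i with i | i
  · rw [hwd, Fsys_sumElim]
    exact (h i hi).symm
  · exact absurd rfl hi

theorem reflTransGen_update_delta {n d d' : Fin L → Bool}
    (h : ∀ i, d i ≠ d' i → d' i = !n i) :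
    ReflTransGen (asyncStep (Fsys G)) (Sum.elim n d) (Sum.elim n d') := by
  refine reflTransGen_asyncStep_of_forall_mem_box fun w hw i hi => ?_
  have hwn : w = Sum.elim n (w ∘ Sum.inr) :=
    (Sum.elim_comp_inl_inr w).symm.trans
      (congrArg (Sum.elim · _) (funext fun j => by simpa using hw (.inl j)))
  rcases i with i | i
  · exact absurd rfl hi
  · rw [hwn, Fsys_sumElim]
    exact (h i hi).symm

theorem reflTransGen_fixedPoint_of_delta_eq {xn xd : Fin L → Bool}
    (hx : Fsys G (Sum.elim xn xd) = Sum.elim xn xd) (n : Fin L → Bool) :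
    ReflTransGen (asyncStep (Fsys G)) (Sum.elim n xd) (Sum.elim xn xd) :=
  reflTransGen_update_notch G fun i _ => by rw [((Fsys_sumElim_eq_self_iff G).1 hx).1]

theorem reflTransGen_fixedPoint_of_delta_const {xn xd : Fin L → Bool}
    (hx : Fsys G (Sum.elim xn xd) = Sum.elim xn xd) (n : Fin L → Bool) (c : Bool) :
    ReflTransGen (asyncStep (Fsys G)) (Sum.elim n fun _ => c) (Sum.elim xn xd) := by
  obtain ⟨hxn, hxd⟩ := (Fsys_sumElim_eq_self_iff G).1 hx
  refine .trans (.trans (reflTransGen_update_notch G fun _ _ => rfl)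
    (reflTransGen_update_delta G fun i hi => ?_)) (reflTransGen_fixedPoint_of_delta_eq G hx _)
  cases c
  · simpa [notchTarget] using hi.symm
  · have hxi : xn i = true := by simpa [hxd] using hi.symm
    obtain ⟨j, hij, -⟩ := of_decide_eq_true (hxn ▸ hxi : notchTarget G xd i = true)
    simpa [notchTarget, hxd, hxi] using ⟨j, hij⟩

end DeltaNotch

theorem stmt16_general {L : ℕ} (G : SimpleGraph (Fin L)) [DecidableRel G.Adj]
    (x : Fin L ⊕ Fin L → Bool) (hx : Fsys G x = x)
    (n d : Fin L → Bool)
    (hhom : (∃ a, ∀ i, n i = a) ∨ (∃ a, ∀ i, d i = a)) :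
    Relation.ReflTransGen (asyncStep (Fsys G)) (Sum.elim n d) x := by
  rw [← Sum.elim_comp_inl_inr x] at hx ⊢
  rcases hhom with ⟨a, hn⟩ | ⟨a, hd⟩
  · have hdelta : ReflTransGen (asyncStep (Fsys G)) (Sum.elim n d) (Sum.elim n fun _ => !a) :=
      reflTransGen_update_delta G fun i _ => by rw [hn]
    exact hdelta.trans (reflTransGen_fixedPoint_of_delta_const G hx n (!a))
  · rw [funext hd]
    exact reflTransGen_fixedPoint_of_delta_const G hx n a

theorem stmt16 {L : ℕ} (G : SimpleGraph (Fin L)) [DecidableRel G.Adj]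
    (hc : G.Connected) (x : Fin L ⊕ Fin L → Bool) (hx : Fsys G x = x)
    (n d : Fin L → Bool)
    (hhom : (∃ a, ∀ i, n i = a) ∨ (∃ a, ∀ i, d i = a)) :
    Relation.ReflTransGen (asyncStep (Fsys G)) (Sum.elim n d) x :=
  stmt16_general G x hx n d hhom
end

section
/- For the generalized reduced system N^k over a graph G, x ∈ B^L is a fixed point of N^k if and only if the set Q = {i : x_i = 1} is a k-minimal transversal of the hypergraph H(k), i.e., Q meets every edge of H(k) and for each i ∈ Q one has |S(i) ∩ Q| ≤ |S(i)| − k. -/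
/-- The generalized reduced Delta-Notch system `N^k`: Notch in cell `i` is high iff at
least `k` neighbouring cells have low Notch. -/
def Nk {L : ℕ} (G : SimpleGraph (Fin L)) [DecidableRel G.Adj] (k : ℕ)
    (x : Fin L → Bool) : Fin L → Bool :=
  fun i => decide (k ≤ ((G.neighborFinset i).filter (fun j => x j = false)).card)

/-! Both conditions are local at each vertex `i` and compare `k` with the number of `false`
neighbours of `i`: the edges `{i} ∪ H` through `i` all meet `Q` iff `x i = true` or fewer than `k`
neighbours are `false` (a `k`-set of `false` neighbours would be a missed edge), and
`|S(i) ∩ Q| ≤ |S(i)| - k` iff at least `k` neighbours are `false`. Together they say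
`x i = true ↔ k ≤ #{j ∈ S(i) | x j = false}`, which is `N^k_i(x) = x_i`. -/

theorem Finset.forall_card_eq_exists_mem_iff_card_filter_not_lt {α : Type*} (s : Finset α)
    (p : α → Prop) [DecidablePred p] (k : ℕ) :
    (∀ H ⊆ s, H.card = k → ∃ q ∈ H, p q) ↔ (s.filter fun a => ¬ p a).card < k := by
  constructor
  · intro hmeet
    by_contra! hge
    obtain ⟨H, hHsub, hHcard⟩ := Finset.exists_subset_card_eq hge
    obtain ⟨q, hqH, hq⟩ := hmeet H (hHsub.trans (Finset.filter_subset _ _)) hHcard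
    exact (Finset.mem_filter.mp (hHsub hqH)).2 hq
  · intro hlt H hHsub hHcard
    by_contra! hnone
    have hH : H ⊆ s.filter fun a => ¬ p a := fun q hq =>
      Finset.mem_filter.mpr ⟨hHsub hq, hnone q hq⟩
    exact (Finset.card_le_card hH).not_gt (hHcard ▸ hlt)

section

variable {V : Type*} (G : SimpleGraph V) (x : V → Bool) (i : V) [Fintype (G.neighborSet i)]

theorem card_filter_true_add_card_filter_false_neighborFinset :
    ((G.neighborFinset i).filter (fun j => x j = true)).card
      + ((G.neighborFinset i).filter (fun j => x j = false)).card = G.degree i := by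
  rw [← G.card_neighborFinset_eq_degree, ← Finset.card_filter_add_card_filter_not
    (s := G.neighborFinset i) (p := fun j => x j = true)]
  simp only [Bool.not_eq_true]

theorem card_filter_true_le_degree_sub_iff (k : ℕ) :
    (((G.neighborFinset i).filter (fun j => x j = true)).card : ℤ) ≤ G.degree i - k ↔
      k ≤ ((G.neighborFinset i).filter (fun j => x j = false)).card := by
  have := card_filter_true_add_card_filter_false_neighborFinset G x i
  omega

theorem forall_card_eq_exists_mem_insert_iff [DecidableEq V] (k : ℕ) :
    (∀ H ⊆ G.neighborFinset i, H.card = k → ∃ q ∈ insert i H, x q = true) ↔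
      (x i = false → ((G.neighborFinset i).filter (fun j => x j = false)).card < k) := by
  simp only [Finset.exists_mem_insert, ← Bool.not_eq_true]
  by_cases hi : x i = true
  · simp [hi]
  · simpa [hi] using Finset.forall_card_eq_exists_mem_iff_card_filter_not_lt
      (G.neighborFinset i) (fun j => x j = true) k

end

theorem Nk_apply_eq_self_iff {L : ℕ} (G : SimpleGraph (Fin L)) [DecidableRel G.Adj]
    (x : Fin L → Bool) (i : Fin L) (k : ℕ) :
    Nk G k x i = x i ↔
      (x i = true ↔ k ≤ ((G.neighborFinset i).filter (fun j => x j = false)).card) := by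
  cases x i <;> simp [Nk]

theorem stmt19_general {L : ℕ} (G : SimpleGraph (Fin L)) [DecidableRel G.Adj]
    (k : ℕ) (x : Fin L → Bool) :
    Nk G k x = x ↔
      ((∀ i : Fin L, ∀ H : Finset (Fin L), H ⊆ G.neighborFinset i → H.card = k →
          ∃ q ∈ insert i H, x q = true) ∧
        ∀ i : Fin L, x i = true →
          (((G.neighborFinset i).filter (fun j => x j = true)).card : ℤ) ≤
            (G.degree i : ℤ) - (k : ℤ)) := by
  simp only [funext_iff, Nk_apply_eq_self_iff, forall_card_eq_exists_mem_insert_iff,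
    card_filter_true_le_degree_sub_iff, ← forall_and]
  refine forall_congr' fun i => ?_
  cases x i <;> simp

theorem stmt19 {L : ℕ} (G : SimpleGraph (Fin L)) [DecidableRel G.Adj]
    (hc : G.Connected) (k : ℕ) (hk : 1 ≤ k) (x : Fin L → Bool) :
    Nk G k x = x ↔
      ((∀ i : Fin L, ∀ H : Finset (Fin L), H ⊆ G.neighborFinset i → H.card = k →
          ∃ q ∈ insert i H, x q = true) ∧
        ∀ i : Fin L, x i = true →
          (((G.neighborFinset i).filter (fun j => x j = true)).card : ℤ) ≤
            (G.degree i : ℤ) - (k : ℤ)) :=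
  stmt19_general G k x
end
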